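/- arXiv:0908.3437 — 2 statements merged into one kernel-verified Lean document; each statement's English description precedes it below -/
import Mathlib

section
/- Let C be a family of K-element subsets of {1,...,n} such that: (i) when S, S' are drawn independently and uniformly from C, the conditional distribution of Z = |S∩S'| given S' is the same for all values of S'; (ii) for every fixed S₀ ∈ C and i ∈ S₀, P{i ∈ S} = K/n for uniform random S ∈ C. Then E[exp(μ²Z)] ≤ (exp(μ²K) - 1)·K/n + 1. Consequently, for δ ∈ (0,1), the Bayes risk satisfies R* ≥ δ whenever μ ≤ √((1/K)·log(1 + 4n(1-δ)²/K)). -/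
open MeasureTheory Real Finset ProbabilityTheory

/-!
By the symmetry (i), averaging `exp (t |S ∩ S'|)` over both sets is the same as averaging
`exp (t |S ∩ S₀|)` over `S` for one fixed `S₀ ∈ C`. Writing `|S ∩ S₀| = ∑_{i ∈ S₀} 1{i ∈ S}`,
convexity of `exp` (the Hölder step) bounds this by the mean over `i ∈ S₀` of `exp (t K 1{i ∈ S})`,
whose average over `S` is `1 + (exp (t K) - 1) K / n` by (ii).

For the risk bound, `L` is the uniform mixture over `S ∈ C` of the likelihood ratios `ρ_c` of
`𝒩(c, I)` against `𝒩(0, I)` with `c = μ 1_S`. These satisfy `∫ ρ_c ρ_d = exp ⟪c, d⟫`, so the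
second moment of `L` is `E[exp(μ² Z)]`; Cauchy–Schwarz then gives
`∫ |L - 1| ≤ √(E[exp(μ² Z)] - 1)`, and the condition on `μ` makes this at most `2 (1 - δ)`.
-/

theorem Finset.sum_comp_eq_of_card_fiber_eq {ι κ M : Type*} [AddCommMonoid M] [DecidableEq κ]
    {s : Finset ι} {g₁ g₂ : ι → κ} (h : ∀ b, #{a ∈ s | g₁ a = b} = #{a ∈ s | g₂ a = b})
    (f : κ → M) : ∑ a ∈ s, f (g₁ a) = ∑ a ∈ s, f (g₂ a) := by
  have mem_image_iff (g : ι → κ) (b : κ) : b ∈ s.image g ↔ 0 < #{a ∈ s | g a = b} := by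
    simp [card_pos, Finset.Nonempty]
  have himage : s.image g₁ = s.image g₂ := by
    ext b
    rw [mem_image_iff, mem_image_iff, h]
  rw [sum_comp, sum_comp, himage]
  exact sum_congr rfl fun b _ => by rw [h]

theorem Real.exp_sum_le_sum_exp_card_mul_div {ι : Type*} {s : Finset ι} (hs : s.Nonempty)
    (p : ι → ℝ) : exp (∑ i ∈ s, p i) ≤ (∑ i ∈ s, exp (#s * p i)) / #s := by
  have hcard : (#s : ℝ) ≠ 0 := by exact_mod_cast hs.card_pos.ne'
  have hjensen := convexOn_exp.map_sum_le (t := s) (w := fun _ => (#s : ℝ)⁻¹)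
    (p := fun i => #s * p i) (fun _ _ => by positivity)
    (by rw [sum_const, nsmul_eq_mul, mul_inv_cancel₀ hcard]) (fun _ _ => Set.mem_univ _)
  simp only [smul_eq_mul, inv_mul_cancel_left₀ hcard, ← mul_sum] at hjensen
  rwa [inv_mul_eq_div] at hjensen

section Overlap

variable {α : Type*} [DecidableEq α]

theorem sum_sum_comp_card_inter_eq {M : Type*} [AddCommMonoid M] {C : Finset (Finset α)}
    (hsym : ∀ S₁ ∈ C, ∀ S₂ ∈ C, ∀ j : ℕ,
      #{S ∈ C | #(S ∩ S₁) = j} = #{S ∈ C | #(S ∩ S₂) = j})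
    {S₀ : Finset α} (hS₀ : S₀ ∈ C) (f : ℕ → M) :
    ∑ S ∈ C, ∑ S' ∈ C, f #(S ∩ S') = #C • ∑ S ∈ C, f #(S ∩ S₀) := by
  rw [← sum_const]
  refine sum_congr rfl fun S hS => ?_
  simp_rw [inter_comm S]
  exact sum_comp_eq_of_card_fiber_eq (hsym S hS S₀ hS₀) f

theorem sum_exp_mul_ite_mem (C : Finset (Finset α)) (i : α) (a : ℝ) :
    ∑ S ∈ C, exp (a * if i ∈ S then 1 else 0) = #C + (exp a - 1) * #{S ∈ C | i ∈ S} := by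
  have hsplit (S : Finset α) :
      exp (a * if i ∈ S then 1 else 0) = 1 + (exp a - 1) * if i ∈ S then 1 else 0 := by
    split_ifs <;> simp
  simp only [hsplit, sum_add_distrib, ← mul_sum, sum_boole, sum_const, nsmul_one]

theorem sum_exp_mul_card_inter_div_le {C : Finset (Finset α)} {S₀ : Finset α} {K : ℕ}
    (hS₀ : S₀ ∈ C) (hK : 0 < K) (hS₀card : #S₀ = K) {q : ℝ}
    (hmarg : ∀ i ∈ S₀, (#{S ∈ C | i ∈ S} : ℝ) / #C = q) (t : ℝ) :
    (∑ S ∈ C, exp (t * #(S ∩ S₀))) / #C ≤ (exp (t * K) - 1) * q + 1 := by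
  have hC : (#C : ℝ) ≠ 0 := by exact_mod_cast (card_pos.mpr ⟨S₀, hS₀⟩).ne'
  have hS₀ne : S₀.Nonempty := card_pos.mp (hS₀card ▸ hK)
  have hcard_inter (S : Finset α) : (#(S ∩ S₀) : ℝ) = ∑ i ∈ S₀, if i ∈ S then 1 else 0 := by
    rw [sum_boole, inter_comm, filter_mem_eq_inter]
  have hjensen (S : Finset α) : exp (t * #(S ∩ S₀))
      ≤ (∑ i ∈ S₀, exp ((K * t) * if i ∈ S then 1 else 0)) / K := by
    have := exp_sum_le_sum_exp_card_mul_div hS₀ne fun i => t * if i ∈ S then 1 else 0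
    simpa only [hcard_inter, mul_sum, hS₀card, mul_assoc] using this
  calc (∑ S ∈ C, exp (t * #(S ∩ S₀))) / #C
      ≤ (∑ S ∈ C, (∑ i ∈ S₀, exp ((K * t) * if i ∈ S then 1 else 0)) / K) / #C := by
        gcongr with S; exact hjensen S
    _ = (∑ i ∈ S₀, (∑ S ∈ C, exp ((K * t) * if i ∈ S then 1 else 0)) / #C) / K := by
        rw [← sum_div, sum_comm, sum_div, sum_div, sum_div]
        exact sum_congr rfl fun _ _ => div_right_comm _ _ _
    _ = (exp (t * K) - 1) * q + 1 := by
        rw [sum_congr rfl fun i hi => by rw [sum_exp_mul_ite_mem, add_div, div_self hC,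
          mul_div_assoc, hmarg i hi], sum_const, hS₀card, nsmul_eq_mul, mul_comm (K : ℝ) t]
        field_simp
        ring

theorem one_div_sq_mul_sum_sum_exp_mul_card_inter_le {C : Finset (Finset α)}
    (hsym : ∀ S₁ ∈ C, ∀ S₂ ∈ C, ∀ j : ℕ,
      #{S ∈ C | #(S ∩ S₁) = j} = #{S ∈ C | #(S ∩ S₂) = j})
    {S₀ : Finset α} {K : ℕ} (hS₀ : S₀ ∈ C) (hK : 0 < K) (hS₀card : #S₀ = K) {q : ℝ}
    (hmarg : ∀ i ∈ S₀, (#{S ∈ C | i ∈ S} : ℝ) / #C = q) (t : ℝ) :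
    1 / (#C : ℝ) ^ 2 * ∑ S ∈ C, ∑ S' ∈ C, exp (t * #(S ∩ S')) ≤ (exp (t * K) - 1) * q + 1 := by
  have hC : (#C : ℝ) ≠ 0 := by exact_mod_cast (card_pos.mpr ⟨S₀, hS₀⟩).ne'
  rw [sum_sum_comp_card_inter_eq hsym hS₀ fun j => exp (t * j), nsmul_eq_mul]
  calc 1 / (#C : ℝ) ^ 2 * (#C * ∑ S ∈ C, exp (t * #(S ∩ S₀)))
      = (∑ S ∈ C, exp (t * #(S ∩ S₀))) / #C := by field_simp
    _ ≤ _ := sum_exp_mul_card_inter_div_le hS₀ hK hS₀card hmarg t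

end Overlap

theorem integral_abs_le_sqrt_integral_sq {Ω : Type*} [MeasurableSpace Ω] {P : Measure Ω}
    [IsProbabilityMeasure P] {f : Ω → ℝ} (hf : MemLp f 2 P) :
    ∫ ω, |f ω| ∂P ≤ sqrt (∫ ω, f ω ^ 2 ∂P) := by
  have hvar := variance_nonneg |f| P
  rw [variance_eq_sub hf.abs] at hvar
  simp only [Pi.pow_apply, Pi.abs_apply, sq_abs] at hvar
  exact (le_sqrt (integral_nonneg fun _ => abs_nonneg _) (integral_nonneg fun _ => sq_nonneg _)).2
    (by linarith)

theorem integral_abs_sub_integral_le_sqrt {Ω : Type*} [MeasurableSpace Ω] {P : Measure Ω}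
    [IsProbabilityMeasure P] {f : Ω → ℝ} (hf : MemLp f 2 P) :
    ∫ ω, |f ω - ∫ ω', f ω' ∂P| ∂P ≤ sqrt (∫ ω, f ω ^ 2 ∂P - (∫ ω, f ω ∂P) ^ 2) := by
  have h := integral_abs_le_sqrt_integral_sq (hf.sub (memLp_const (∫ ω', f ω' ∂P)))
  simp only [Pi.sub_apply] at h
  rwa [← variance_eq_integral hf.aemeasurable, variance_eq_sub hf] at h

theorem exp_sq_mul_sub_one_mul_div_le {n K : ℕ} (hK : 0 < K) {μ a : ℝ} (hμ : 0 ≤ μ) (ha : 0 ≤ a)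
    (hμle : μ ≤ sqrt (1 / K * log (1 + 4 * n * a / K))) :
    (exp (μ ^ 2 * K) - 1) * K / n ≤ 4 * a := by
  have hK₀ : (0 : ℝ) < K := by exact_mod_cast hK
  have hb : 0 < 1 + 4 * n * a / K := by positivity
  have hexp : exp (μ ^ 2 * K) ≤ 1 + 4 * n * a / K := by
    rw [← le_log_iff_exp_le hb, ← le_div_iff₀ hK₀, div_eq_inv_mul, ← one_div]
    have hlog : 0 ≤ log (1 + 4 * n * a / K) := log_nonneg (le_add_of_nonneg_right (by positivity))
    exact (le_sqrt hμ (mul_nonneg (by positivity) hlog)).1 hμle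
  calc (exp (μ ^ 2 * K) - 1) * K / n ≤ 4 * n * a / K * K / n := by gcongr; linarith
    _ = 4 * a * (n / n) := by field_simp
    _ ≤ 4 * a := mul_le_of_le_one_right (by positivity) (div_self_le_one _)

section GaussianPi

variable {ι : Type*} [Fintype ι]

theorem integrable_exp_sum_mul_gaussianReal_pi (c : ι → ℝ) :
    Integrable (fun x : ι → ℝ => exp (∑ i, c i * x i)) (Measure.pi fun _ => gaussianReal 0 1) := by
  simpa only [exp_sum] using Integrable.fintype_prod (f := fun i x => exp (c i * x))
    fun i => integrable_exp_mul_gaussianReal (c i)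

theorem integral_exp_sum_mul_gaussianReal_pi (c : ι → ℝ) :
    ∫ x, exp (∑ i, c i * x i) ∂(Measure.pi fun _ => gaussianReal 0 1) = exp (∑ i, c i ^ 2 / 2) := by
  simp only [exp_sum]
  rw [integral_fintype_prod_eq_prod (f := fun i x => exp (c i * x))]
  refine prod_congr rfl fun i _ => ?_
  simpa [mgf] using
    mgf_gaussianReal (μ := 0) (v := 1) (p := gaussianReal 0 1) (X := id) (by simp) (c i)

noncomputable def gaussianLikelihoodRatio (c x : ι → ℝ) : ℝ :=
  exp (∑ i, c i * x i - ∑ i, c i ^ 2 / 2)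

theorem gaussianLikelihoodRatio_eq (c x : ι → ℝ) :
    gaussianLikelihoodRatio c x = exp (-∑ i, c i ^ 2 / 2) * exp (∑ i, c i * x i) := by
  rw [gaussianLikelihoodRatio, ← exp_add, neg_add_eq_sub]

theorem gaussianLikelihoodRatio_mul (c d x : ι → ℝ) :
    gaussianLikelihoodRatio c x * gaussianLikelihoodRatio d x
      = exp (∑ i, c i * d i) * gaussianLikelihoodRatio (c + d) x := by
  simp only [gaussianLikelihoodRatio, ← exp_add, Pi.add_apply]
  congr 1
  simp only [← sum_sub_distrib, ← sum_add_distrib]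
  exact sum_congr rfl fun i _ => by ring

theorem continuous_gaussianLikelihoodRatio (c : ι → ℝ) :
    Continuous (gaussianLikelihoodRatio c) := by
  unfold gaussianLikelihoodRatio
  fun_prop

theorem integrable_gaussianLikelihoodRatio (c : ι → ℝ) :
    Integrable (gaussianLikelihoodRatio c) (Measure.pi fun _ => gaussianReal 0 1) := by
  rw [show gaussianLikelihoodRatio c = _ from funext (gaussianLikelihoodRatio_eq c)]
  exact (integrable_exp_sum_mul_gaussianReal_pi c).const_mul _

theorem integral_gaussianLikelihoodRatio (c : ι → ℝ) :
    ∫ x, gaussianLikelihoodRatio c x ∂(Measure.pi fun _ => gaussianReal 0 1) = 1 := by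
  simp only [gaussianLikelihoodRatio_eq]
  rw [integral_const_mul, integral_exp_sum_mul_gaussianReal_pi, ← exp_add, neg_add_cancel,
    exp_zero]

theorem integrable_gaussianLikelihoodRatio_mul (c d : ι → ℝ) :
    Integrable (fun x => gaussianLikelihoodRatio c x * gaussianLikelihoodRatio d x)
      (Measure.pi fun _ => gaussianReal 0 1) := by
  simpa only [gaussianLikelihoodRatio_mul] using
    (integrable_gaussianLikelihoodRatio (c + d)).const_mul _

theorem integral_gaussianLikelihoodRatio_mul (c d : ι → ℝ) :
    ∫ x, gaussianLikelihoodRatio c x * gaussianLikelihoodRatio d x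
      ∂(Measure.pi fun _ => gaussianReal 0 1) = exp (∑ i, c i * d i) := by
  simp only [gaussianLikelihoodRatio_mul]
  rw [integral_const_mul, integral_gaussianLikelihoodRatio, mul_one]

theorem memLp_two_gaussianLikelihoodRatio (c : ι → ℝ) :
    MemLp (gaussianLikelihoodRatio c) 2 (Measure.pi fun _ => gaussianReal 0 1) := by
  refine (memLp_two_iff_integrable_sq
    (continuous_gaussianLikelihoodRatio c).aestronglyMeasurable).2 ?_
  simpa only [sq] using integrable_gaussianLikelihoodRatio_mul c c

theorem integral_abs_mixture_gaussianLikelihoodRatio_sub_one_le {α : Type*} {C : Finset α}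
    (hC : C.Nonempty) (c : α → ι → ℝ) :
    ∫ x, |1 / (#C : ℝ) * ∑ a ∈ C, gaussianLikelihoodRatio (c a) x - 1|
        ∂(Measure.pi fun _ => gaussianReal 0 1)
      ≤ sqrt (1 / (#C : ℝ) ^ 2 * ∑ a ∈ C, ∑ b ∈ C, exp (∑ i, c a i * c b i) - 1) := by
  set L := fun x => 1 / (#C : ℝ) * ∑ a ∈ C, gaussianLikelihoodRatio (c a) x
  have hC₀ : (#C : ℝ) ≠ 0 := by exact_mod_cast hC.card_pos.ne'
  have hL : MemLp L 2 (Measure.pi fun _ => gaussianReal 0 1) :=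
    (memLp_finsetSum C fun a _ => memLp_two_gaussianLikelihoodRatio (c a)).const_mul _
  have hL1 : ∫ x, L x ∂(Measure.pi fun _ => gaussianReal 0 1) = 1 := by
    rw [integral_const_mul,
      integral_finsetSum _ fun a _ => integrable_gaussianLikelihoodRatio (c a)]
    simp only [integral_gaussianLikelihoodRatio, sum_const, nsmul_one]
    field_simp
  have hL2 : ∫ x, L x ^ 2 ∂(Measure.pi fun _ => gaussianReal 0 1)
      = 1 / (#C : ℝ) ^ 2 * ∑ a ∈ C, ∑ b ∈ C, exp (∑ i, c a i * c b i) := by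
    simp only [L, mul_pow, sq (∑ a ∈ C, _), sum_mul_sum, one_div, inv_pow]
    rw [integral_const_mul, integral_finsetSum _ fun a _ => integrable_finsetSum _ fun b _ =>
      integrable_gaussianLikelihoodRatio_mul (c a) (c b)]
    simp only [integral_finsetSum _ fun b _ => integrable_gaussianLikelihoodRatio_mul _ (c b),
      integral_gaussianLikelihoodRatio_mul]
  have h := integral_abs_sub_integral_le_sqrt hL
  rwa [hL1, hL2, one_pow] at h

variable [DecidableEq ι]

theorem sum_ite_mem_mul (S : Finset ι) (μ : ℝ) (x : ι → ℝ) :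
    ∑ i, (if i ∈ S then μ else 0) * x i = μ * ∑ i ∈ S, x i := by
  simp [ite_mul, sum_ite_mem, mul_sum]

theorem sum_ite_mem_mul_ite_mem (S S' : Finset ι) (μ : ℝ) :
    ∑ i, (if i ∈ S then μ else 0) * (if i ∈ S' then μ else 0) = μ ^ 2 * #(S ∩ S') := by
  rw [sum_ite_mem_mul, sum_ite_mem, sum_const, nsmul_eq_mul]
  ring

theorem gaussianLikelihoodRatio_ite_mem (S : Finset ι) (μ : ℝ) (x : ι → ℝ) :
    gaussianLikelihoodRatio (fun i => if i ∈ S then μ else 0) x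
      = exp (μ * ∑ i ∈ S, x i - #S * μ ^ 2 / 2) := by
  rw [gaussianLikelihoodRatio, sum_ite_mem_mul, ← sum_div]
  simp only [sq (ite _ _ _), sum_ite_mem_mul_ite_mem, inter_self]
  ring_nf

end GaussianPi

theorem stmt4_general (n K : ℕ) (hK : 0 < K) (μ δ : ℝ) (hμ : 0 < μ)
    (hδ : δ ∈ Set.Ioo (0:ℝ) 1)
    (C : Finset (Finset (Fin n))) (hC : C.Nonempty) (hcard : ∀ S ∈ C, S.card = K)
    -- (i) the conditional distribution of Z = |S ∩ S'| given S' is the same for all S'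
    (hsym : ∀ S₁ ∈ C, ∀ S₂ ∈ C, ∀ j : ℕ,
      (C.filter fun S => (S ∩ S₁).card = j).card
        = (C.filter fun S => (S ∩ S₂).card = j).card)
    -- (ii) for any fixed S₀ ∈ C and i ∈ S₀, P{i ∈ S} = K/n
    (hmarg : ∀ S₀ ∈ C, ∀ i ∈ S₀,
      ((C.filter fun S => i ∈ S).card : ℝ) / C.card = (K : ℝ) / n)
    (EZ : ℝ)
    (hEZ : EZ = (1 / (C.card : ℝ)^2) *
      ∑ S ∈ C, ∑ S' ∈ C, Real.exp (μ^2 * ((S ∩ S').card : ℝ)))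
    (P₀ : Measure (Fin n → ℝ))
    (hP₀ : P₀ = Measure.pi fun _ : Fin n => gaussianReal 0 1)
    (L : (Fin n → ℝ) → ℝ)
    (hL : ∀ x, L x = (1 / (C.card : ℝ)) *
      ∑ S ∈ C, Real.exp (μ * (∑ i ∈ S, x i) - K * μ^2 / 2)) :
    EZ ≤ (Real.exp (μ^2 * K) - 1) * K / n + 1 ∧
    (μ ≤ Real.sqrt ((1 / K) * Real.log (1 + 4 * n * (1 - δ)^2 / K)) →
      δ ≤ 1 - (1/2) * ∫ x, |L x - 1| ∂P₀) := by
  obtain ⟨S₀, hS₀⟩ := hC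
  have hEZ_le : EZ ≤ (exp (μ ^ 2 * K) - 1) * K / n + 1 := by
    rw [hEZ, mul_div_assoc]
    exact one_div_sq_mul_sum_sum_exp_mul_card_inter_le hsym hS₀ hK (hcard S₀ hS₀)
      (hmarg S₀ hS₀) _
  refine ⟨hEZ_le, fun hμle => ?_⟩
  set c : Finset (Fin n) → Fin n → ℝ := fun S i => if i ∈ S then μ else 0
  have hL_mixture : L = fun x => 1 / (#C : ℝ) * ∑ S ∈ C, gaussianLikelihoodRatio (c S) x := by
    ext x
    rw [hL]
    congr 1
    exact sum_congr rfl fun S hS => by rw [gaussianLikelihoodRatio_ite_mem, hcard S hS]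
  have hEZ_inner : EZ = 1 / (#C : ℝ) ^ 2 * ∑ S ∈ C, ∑ S' ∈ C, exp (∑ i, c S i * c S' i) := by
    simp only [hEZ, c, sum_ite_mem_mul_ite_mem]
  have hTV : ∫ x, |L x - 1| ∂P₀ ≤ sqrt (EZ - 1) := by
    rw [hP₀, hL_mixture, hEZ_inner]
    exact integral_abs_mixture_gaussianLikelihoodRatio_sub_one_le ⟨S₀, hS₀⟩ c
  have hχ : EZ - 1 ≤ (2 * (1 - δ)) ^ 2 := by
    have := exp_sq_mul_sub_one_mul_div_le hK hμ.le (sq_nonneg (1 - δ)) hμle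
    linarith
  have h2δ : 0 ≤ 2 * (1 - δ) := by linarith [hδ.2]
  have hTV_le : ∫ x, |L x - 1| ∂P₀ ≤ 2 * (1 - δ) :=
    hTV.trans ((sqrt_le_sqrt hχ).trans_eq (sqrt_sq h2δ))
  linarith

/-- For a symmetric class `C` of `K`-subsets of `{1,...,n}`
(the conditional law of the overlap `Z = |S ∩ S'|` given `S'` does not depend
on `S'`, and each coordinate of a fixed member is covered with probability
`K/n`), one has `E[exp(μ²Z)] ≤ (exp(μ²K) - 1)·K/n + 1`; consequently for
`δ ∈ (0,1)` the Bayes risk satisfies `R* ≥ δ` whenever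
`μ ≤ √((1/K)·log(1 + 4n(1-δ)²/K))`. -/
theorem stmt4 (n K : ℕ) (hn : 0 < n) (hK : 0 < K) (μ δ : ℝ) (hμ : 0 < μ)
    (hδ : δ ∈ Set.Ioo (0:ℝ) 1)
    (C : Finset (Finset (Fin n))) (hC : C.Nonempty) (hcard : ∀ S ∈ C, S.card = K)
    -- (i) the conditional distribution of Z = |S ∩ S'| given S' is the same for all S'
    (hsym : ∀ S₁ ∈ C, ∀ S₂ ∈ C, ∀ j : ℕ,
      (C.filter fun S => (S ∩ S₁).card = j).card
        = (C.filter fun S => (S ∩ S₂).card = j).card)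
    -- (ii) for any fixed S₀ ∈ C and i ∈ S₀, P{i ∈ S} = K/n
    (hmarg : ∀ S₀ ∈ C, ∀ i ∈ S₀,
      ((C.filter fun S => i ∈ S).card : ℝ) / C.card = (K : ℝ) / n)
    (EZ : ℝ)
    (hEZ : EZ = (1 / (C.card : ℝ)^2) *
      ∑ S ∈ C, ∑ S' ∈ C, Real.exp (μ^2 * ((S ∩ S').card : ℝ)))
    (P₀ : Measure (Fin n → ℝ))
    (hP₀ : P₀ = Measure.pi fun _ : Fin n => gaussianReal 0 1)
    (L : (Fin n → ℝ) → ℝ)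
    (hL : ∀ x, L x = (1 / (C.card : ℝ)) *
      ∑ S ∈ C, Real.exp (μ * (∑ i ∈ S, x i) - K * μ^2 / 2)) :
    EZ ≤ (Real.exp (μ^2 * K) - 1) * K / n + 1 ∧
    (μ ≤ Real.sqrt ((1 / K) * Real.log (1 + 4 * n * (1 - δ)^2 / K)) →
      δ ≤ 1 - (1/2) * ∫ x, |L x - 1| ∂P₀) :=
  stmt4_general n K hK μ δ hμ hδ C hC hcard hsym hmarg EZ hEZ P₀ hP₀ L hL
end

section
/- For any family C of K-element subsets of {1,...,n}, the Bayes risk satisfies R* ≥ 1/2 whenever μ ≤ √((4/K)·log(4/3)). -/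
/-!
With `r = √L`, `|L - 1| = |r - 1| (r + 1)`, and Cauchy–Schwarz together with `E₀ r² = E₀ L = 1`
gives `E₀ |L - 1| ≤ 2 √(1 - (E₀ r)²)`. By concavity of the square root, `E₀ √L` is at least the
average over `S ∈ C` of `E₀ √(dP_S/dP₀) = exp (-Kμ²/8)`, and the bound on `μ` makes
`exp (-Kμ²/4) ≥ 3/4`, so `E₀ |L - 1| ≤ 2 √(1/4) = 1`.
-/

open MeasureTheory Real Finset ProbabilityTheory
open scoped NNReal

section Hellinger

variable {Ω : Type*} [MeasurableSpace Ω] {ν : Measure Ω}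

theorem integral_mul_le_sqrt_mul_sqrt_of_nonneg {f g : Ω → ℝ} (hf₀ : 0 ≤ f) (hg₀ : 0 ≤ g)
    (hf : MemLp f 2 ν) (hg : MemLp g 2 ν) :
    ∫ x, f x * g x ∂ν ≤ √(∫ x, f x ^ 2 ∂ν) * √(∫ x, g x ^ 2 ∂ν) := by
  have h := integral_mul_le_Lp_mul_Lq_of_nonneg Real.HolderConjugate.two_two
    (.of_forall hf₀) (.of_forall hg₀) (by simpa using hf) (by simpa using hg)
  simpa [Real.sqrt_eq_rpow] using h

theorem MeasureTheory.Integrable.memLp_two_sqrt {L : Ω → ℝ} (hL₀ : 0 ≤ L)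
    (hL : Integrable L ν) :
    MemLp (fun x => √(L x)) 2 ν :=
  (memLp_two_iff_integrable_sq (continuous_sqrt.comp_aestronglyMeasurable hL.1)).2
    (hL.congr (.of_forall fun x => (sq_sqrt (hL₀ x)).symm))

theorem integral_abs_sub_one_le_two_mul_sqrt [IsProbabilityMeasure ν] {L : Ω → ℝ}
    (hL₀ : 0 ≤ L) (hL : Integrable L ν) (hL₁ : ∫ x, L x ∂ν = 1) :
    ∫ x, |L x - 1| ∂ν ≤ 2 * √(1 - (∫ x, √(L x) ∂ν) ^ 2) := by
  set A := ∫ x, √(L x) ∂ν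
  have hsq : ∀ x, √(L x) ^ 2 = L x := fun x => sq_sqrt (hL₀ x)
  have hr := hL.memLp_two_sqrt hL₀
  have hr₁ : Integrable (fun x => √(L x)) ν := hr.integrable one_le_two
  have hA : 0 ≤ A := integral_nonneg fun x => sqrt_nonneg _
  have hsub_int : Integrable (fun x => L x - 2 * √(L x)) ν := hL.sub (hr₁.const_mul 2)
  have hadd_int : Integrable (fun x => L x + 2 * √(L x)) ν := hL.add (hr₁.const_mul 2)
  have hsub : ∫ x, |√(L x) - 1| ^ 2 ∂ν = 2 - 2 * A := by
    simp_rw [sq_abs, sub_sq, hsq, mul_one, one_pow]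
    rw [integral_add hsub_int (integrable_const 1), integral_sub hL (hr₁.const_mul 2),
      integral_const_mul, hL₁]
    simp only [integral_const, probReal_univ, smul_eq_mul, mul_one]
    ring
  have hadd : ∫ x, (√(L x) + 1) ^ 2 ∂ν = 2 + 2 * A := by
    simp_rw [add_sq, hsq, mul_one, one_pow]
    rw [integral_add hadd_int (integrable_const 1), integral_add hL (hr₁.const_mul 2),
      integral_const_mul, hL₁]
    simp only [integral_const, probReal_univ, smul_eq_mul, mul_one]
    ring
  calc ∫ x, |L x - 1| ∂ν = ∫ x, |√(L x) - 1| * (√(L x) + 1) ∂ν := by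
        refine integral_congr_ae (.of_forall fun x => ?_)
        dsimp only
        rw [← abs_of_nonneg (by positivity : 0 ≤ √(L x) + 1), ← abs_mul]
        congr 1
        linear_combination -(hsq x)
    _ ≤ √(2 - 2 * A) * √(2 + 2 * A) := by
        rw [← hsub, ← hadd]
        exact integral_mul_le_sqrt_mul_sqrt_of_nonneg (fun x => abs_nonneg _)
          (fun x => by positivity) (by simpa using (hr.sub (memLp_const 1)).norm)
          (hr.add (memLp_const 1))
    _ = 2 * √(1 - A ^ 2) := by
        rw [← sqrt_mul' _ (by positivity),
          show (2 - 2 * A) * (2 + 2 * A) = 2 ^ 2 * (1 - A ^ 2) by ring,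
          sqrt_mul (by positivity), sqrt_sq zero_le_two]

end Hellinger

theorem Real.one_div_card_mul_sum_sqrt_le {ι : Type*} {s : Finset ι} (hs : s.Nonempty)
    {f : ι → ℝ} (hf : ∀ i ∈ s, 0 ≤ f i) :
    1 / #s * ∑ i ∈ s, √(f i) ≤ √(1 / #s * ∑ i ∈ s, f i) := by
  have hw : ∑ _i ∈ s, (1 / #s : ℝ) = 1 := by
    rw [sum_const, nsmul_eq_mul, mul_one_div_cancel (by exact_mod_cast hs.card_pos.ne')]
  simpa only [smul_eq_mul, ← mul_sum] using
    Real.strictConcaveOn_sqrt.concaveOn.le_map_sum (fun _ _ => by positivity) hw hf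

section PiGaussian

variable {ι : Type*} [Fintype ι]

theorem mgf_sum_pi_gaussianReal (m : ℝ) (v : ℝ≥0) (S : Finset ι) (t : ℝ) :
    mgf (∑ i ∈ S, fun x : ι → ℝ => x i) (Measure.pi fun _ => gaussianReal m v) t
      = exp (#S * (m * t + v * t ^ 2 / 2)) := by
  have hindep : iIndepFun (fun i (x : ι → ℝ) => x i) (Measure.pi fun _ => gaussianReal m v) :=
    iIndepFun_pi (X := fun _ => id) fun _ => aemeasurable_id
  rw [hindep.mgf_sum measurable_pi_apply, exp_nat_mul, ← prod_const]
  exact prod_congr rfl fun i _ =>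
    mgf_gaussianReal (measurePreserving_eval (fun _ => gaussianReal m v) i).map_eq t

theorem integrable_exp_mul_sum_pi_gaussianReal (m : ℝ) (v : ℝ≥0) (S : Finset ι) (t : ℝ) :
    Integrable (fun x : ι → ℝ => exp (t * ∑ i ∈ S, x i))
      (Measure.pi fun _ => gaussianReal m v) := by
  have h := mgf_pos_iff.1 ((mgf_sum_pi_gaussianReal m v S t).symm ▸ exp_pos _)
  simpa only [Finset.sum_apply] using h

theorem integral_exp_mul_sum_pi_gaussianReal (m : ℝ) (v : ℝ≥0) (S : Finset ι) (t : ℝ) :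
    ∫ x, exp (t * ∑ i ∈ S, x i) ∂(Measure.pi fun _ => gaussianReal m v)
      = exp (#S * (m * t + v * t ^ 2 / 2)) := by
  rw [← mgf_sum_pi_gaussianReal, mgf]
  simp only [Finset.sum_apply]

end PiGaussian

section LikelihoodRatio

variable {ι : Type*}

/-- The density of `N(t • 𝟙_S, I)` with respect to `N(0, I)`. -/
noncomputable def gaussianShiftLR (S : Finset ι) (t : ℝ) (x : ι → ℝ) : ℝ :=
  exp (t * ∑ i ∈ S, x i - #S * t ^ 2 / 2)

noncomputable def gaussianMixtureLR (C : Finset (Finset ι)) (t : ℝ) (x : ι → ℝ) : ℝ :=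
  1 / #C * ∑ S ∈ C, gaussianShiftLR S t x

theorem gaussianMixtureLR_nonneg (C : Finset (Finset ι)) (t : ℝ) : 0 ≤ gaussianMixtureLR C t :=
  fun x => by unfold gaussianMixtureLR gaussianShiftLR; positivity

variable [Fintype ι]

local notation "𝒩" => Measure.pi fun _ => gaussianReal 0 1

theorem integral_gaussianShiftLR (S : Finset ι) (t : ℝ) :
    ∫ x, gaussianShiftLR S t x ∂𝒩 = 1 := by
  simp_rw [gaussianShiftLR, exp_sub]
  rw [integral_div, integral_exp_mul_sum_pi_gaussianReal, ← exp_sub, NNReal.coe_one]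
  ring_nf
  exact exp_zero

theorem integrable_gaussianShiftLR (S : Finset ι) (t : ℝ) :
    Integrable (gaussianShiftLR S t) 𝒩 := by
  unfold gaussianShiftLR
  simp_rw [exp_sub]
  exact (integrable_exp_mul_sum_pi_gaussianReal 0 1 S t).div_const _

theorem integral_sqrt_gaussianShiftLR (S : Finset ι) (t : ℝ) :
    ∫ x, √(gaussianShiftLR S t x) ∂𝒩 = exp (-(#S * t ^ 2 / 8)) := by
  have h : ∀ x : ι → ℝ,
      √(gaussianShiftLR S t x) = exp (t / 2 * ∑ i ∈ S, x i) / exp (#S * t ^ 2 / 4) := by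
    intro x
    rw [gaussianShiftLR, ← exp_half, ← exp_sub]
    ring_nf
  simp_rw [h]
  rw [integral_div, integral_exp_mul_sum_pi_gaussianReal, ← exp_sub, NNReal.coe_one]
  ring_nf

theorem integrable_gaussianMixtureLR (C : Finset (Finset ι)) (t : ℝ) :
    Integrable (gaussianMixtureLR C t) 𝒩 :=
  (integrable_finsetSum C fun S _ => integrable_gaussianShiftLR S t).const_mul _

theorem integral_gaussianMixtureLR {C : Finset (Finset ι)} (hC : C.Nonempty) (t : ℝ) :
    ∫ x, gaussianMixtureLR C t x ∂𝒩 = 1 := by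
  unfold gaussianMixtureLR
  rw [integral_const_mul, integral_finsetSum C fun S _ => integrable_gaussianShiftLR S t]
  simp only [integral_gaussianShiftLR, sum_const, nsmul_eq_mul, mul_one]
  exact one_div_mul_cancel (by exact_mod_cast hC.card_pos.ne')

theorem exp_le_integral_sqrt_gaussianMixtureLR {C : Finset (Finset ι)} (hC : C.Nonempty)
    {K : ℕ} (hcard : ∀ S ∈ C, #S = K) (t : ℝ) :
    exp (-(K * t ^ 2 / 8)) ≤ ∫ x, √(gaussianMixtureLR C t x) ∂𝒩 := by
  have hint : ∀ S ∈ C, Integrable (fun x => √(gaussianShiftLR S t x)) 𝒩 := fun S _ =>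
    ((integrable_gaussianShiftLR S t).memLp_two_sqrt fun _ => (exp_pos _).le).integrable
      one_le_two
  calc exp (-(K * t ^ 2 / 8)) = ∫ x, 1 / #C * ∑ S ∈ C, √(gaussianShiftLR S t x) ∂𝒩 := by
        rw [integral_const_mul, integral_finsetSum C hint,
          sum_congr rfl fun S hS => by rw [integral_sqrt_gaussianShiftLR, hcard S hS],
          sum_const, nsmul_eq_mul, ← mul_assoc,
          one_div_mul_cancel (by exact_mod_cast hC.card_pos.ne'), one_mul]
    _ ≤ ∫ x, √(gaussianMixtureLR C t x) ∂𝒩 :=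
        integral_mono ((integrable_finsetSum C hint).const_mul _)
          (((integrable_gaussianMixtureLR C t).memLp_two_sqrt
            (gaussianMixtureLR_nonneg C t)).integrable one_le_two)
          fun x => Real.one_div_card_mul_sum_sqrt_le hC fun S _ => (exp_pos _).le

end LikelihoodRatio

theorem three_quarters_le_exp_of_le_sqrt {K μ : ℝ} (hK : 0 < K) (hμ : 0 < μ)
    (h : μ ≤ √(4 / K * log (4 / 3))) : 3 / 4 ≤ exp (-(K * μ ^ 2 / 4)) := by
  have hμ2 : K * μ ^ 2 / 4 ≤ log (4 / 3) := by
    rw [le_sqrt' hμ, div_mul_eq_mul_div, le_div_iff₀ hK] at h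
    linarith
  calc (3 / 4 : ℝ) = exp (-log (4 / 3)) := by rw [exp_neg, exp_log (by norm_num)]; norm_num
    _ ≤ exp (-(K * μ ^ 2 / 4)) := exp_le_exp.2 (neg_le_neg hμ2)

/-- For any family `C` of `K`-element subsets of `{1,...,n}`, the
Bayes risk `R* = 1 - (1/2) E₀|L(X) - 1|` satisfies `R* ≥ 1/2` whenever
`μ ≤ √((4/K)·log(4/3))`. -/
theorem stmt9 (n K : ℕ) (hK : 0 < K) (μ : ℝ) (hμ : 0 < μ)
    (C : Finset (Finset (Fin n))) (hC : C.Nonempty) (hcard : ∀ S ∈ C, S.card = K)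
    (P₀ : Measure (Fin n → ℝ))
    (hP₀ : P₀ = Measure.pi fun _ : Fin n => gaussianReal 0 1)
    (L : (Fin n → ℝ) → ℝ)
    (hL : ∀ x, L x = (1 / (C.card : ℝ)) *
      ∑ S ∈ C, Real.exp (μ * (∑ i ∈ S, x i) - K * μ^2 / 2))
    (hμsmall : μ ≤ Real.sqrt ((4 / (K : ℝ)) * Real.log (4/3))) :
    (1 : ℝ)/2 ≤ 1 - (1/2) * ∫ x, |L x - 1| ∂P₀ := by
  have hL_eq : L = gaussianMixtureLR C μ := funext fun x => by
    rw [hL, gaussianMixtureLR]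
    congr 1
    exact sum_congr rfl fun S hS => by rw [gaussianShiftLR, hcard S hS]
  subst hP₀ hL_eq
  set A := ∫ x, √(gaussianMixtureLR C μ x) ∂(Measure.pi fun _ : Fin n => gaussianReal 0 1)
  have hA : 3 / 4 ≤ A ^ 2 :=
    calc (3 / 4 : ℝ) ≤ exp (-(K * μ ^ 2 / 4)) :=
          three_quarters_le_exp_of_le_sqrt (by exact_mod_cast hK) hμ hμsmall
      _ = exp (-(K * μ ^ 2 / 8)) ^ 2 := by rw [← exp_nat_mul]; ring_nf
      _ ≤ A ^ 2 := pow_le_pow_left₀ (exp_pos _).le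
          (exp_le_integral_sqrt_gaussianMixtureLR hC hcard μ) 2
  have hTV := integral_abs_sub_one_le_two_mul_sqrt (gaussianMixtureLR_nonneg C μ)
    (integrable_gaussianMixtureLR C μ) (integral_gaussianMixtureLR hC μ)
  have hroot : √(1 - A ^ 2) ≤ 1 / 2 := (sqrt_le_left (by norm_num)).2 (by linarith)
  linarith
end
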